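/- Let C be a field, let W, D, F ∈ C⟦u⟧ be formal power series, let e ≥ 1 and ℓ ≥ 0 be integers, and let r ≥ 0 be an integer. Assume the constant coefficient of W is nonzero, that D has order exactly e, and that F has order exactly ℓ. Let M ⊆ C⟦u⟧ be the C-linear span of the family (W^{r−j}·D^{j}·F) for j = 0, …, r. For an integer N ≥ 0, the subspace of tuples (c_0, c_1, …, c_{r+N+1}) ∈ C^{r+N+2} such that ∑_{i=0}^{r+N+1} c_i · (coefficient of u^{i·e+ℓ} in f) = 0 for every f ∈ M is a C-vector space of dimension N+1. -/

import Mathlib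

/-!
The `r + 1` generators `W ^ (r - j) * D ^ j * F` have orders `j * e + ℓ`, so the matrix of the
coefficients `coeff (i * e + ℓ)` on them has, in its first `r + 1` columns, an upper triangular
block with nonzero diagonal. It therefore has full row rank `r + 1`, and the relations form its
kernel, of dimension `(r + N + 2) - (r + 1) = N + 1`.
-/

open PowerSeries

theorem PowerSeries.order_pow_mul_pow_mul {R : Type*} [CommSemiring R] [NoZeroDivisors R]
    [Nontrivial R] {W D F : R⟦X⟧} {e ℓ : ℕ} (hW : order W = 0) (hD : order D = e)
    (hF : order F = ℓ) (a b : ℕ) : order (W ^ a * D ^ b * F) = (b * e + ℓ : ℕ) := by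
  simp [order_mul, order_pow, hW, hD, hF]

theorem LinearMap.forall_mem_span_range_eq_zero_iff {R M N ι : Type*} [Semiring R]
    [AddCommMonoid M] [AddCommMonoid N] [Module R M] [Module R N] (φ : M →ₗ[R] N)
    (g : ι → M) :
    (∀ f ∈ Submodule.span R (Set.range g), φ f = 0) ↔ ∀ j, φ (g j) = 0 := by
  simpa [SetLike.le_def] using
    (Submodule.span_le (p := LinearMap.ker φ)).trans Set.range_subset_iff

namespace Matrix

variable {K m n : Type*} [Field K] [Fintype n]

theorem finrank_ker_mulVecLin (A : Matrix m n K) :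
    Module.finrank K (LinearMap.ker A.mulVecLin) = Fintype.card n - A.rank := by
  have := LinearMap.finrank_range_add_finrank_ker A.mulVecLin
  rw [Module.finrank_fintype_fun_eq_card] at this
  rw [rank]
  omega

theorem rank_eq_card_height_of_isUpperTriangular [Fintype m] [LinearOrder m] (A : Matrix m n K)
    (c : m → n) (hA : (A.submatrix id c).IsUpperTriangular) (hdiag : ∀ j, A j (c j) ≠ 0) :
    A.rank = Fintype.card m := by
  classical
  have hunit : IsUnit (A.submatrix id c) := by
    rw [isUnit_iff_isUnit_det, det_of_isUpperTriangular hA, isUnit_iff_ne_zero]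
    exact Finset.prod_ne_zero_iff.2 fun j _ => hdiag j
  refine le_antisymm A.rank_le_card_height ?_
  rw [← rank_of_isUnit _ hunit]
  exact rank_submatrix_le A id c

end Matrix

/-- The space of linear relations `∑_{i=0}^{r+N+1} c_i · coeff (i*e+ℓ) f = 0` (for all `f`
in the span `M` of the family `W^(r-j) * D^j * F`, `j = 0, …, r`) among the initial
coefficients has dimension `N + 1`. -/
theorem stmt3 (C : Type*) [Field C] (W D F : PowerSeries C) (e ℓ r N : ℕ)
    (he : 1 ≤ e)
    (hW : PowerSeries.coeff 0 W ≠ 0)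
    (hD0 : ∀ n < e, PowerSeries.coeff n D = 0)
    (hDe : PowerSeries.coeff e D ≠ 0)
    (hF0 : ∀ n < ℓ, PowerSeries.coeff n F = 0)
    (hFl : PowerSeries.coeff ℓ F ≠ 0)
    (L : Submodule C (Fin (r + N + 2) → C))
    (hL : ∀ c : Fin (r + N + 2) → C, c ∈ L ↔
      ∀ f ∈ Submodule.span C
          (Set.range fun j : Fin (r + 1) => W ^ (r - (j : ℕ)) * D ^ (j : ℕ) * F),
        ∑ i : Fin (r + N + 2), c i * PowerSeries.coeff ((i : ℕ) * e + ℓ) f = 0) :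
    Module.finrank C L = N + 1 := by
  set g : Fin (r + 1) → C⟦X⟧ := fun j => W ^ (r - (j : ℕ)) * D ^ (j : ℕ) * F
  have hord (j : Fin (r + 1)) : order (g j) = ((j : ℕ) * e + ℓ : ℕ) :=
    order_pow_mul_pow_mul (order_eq_nat.2 ⟨hW, by simp⟩) (order_eq_nat.2 ⟨hDe, hD0⟩)
      (order_eq_nat.2 ⟨hFl, hF0⟩) _ _
  set A : Matrix (Fin (r + 1)) (Fin (r + N + 2)) C :=
    Matrix.of fun j i => coeff ((i : ℕ) * e + ℓ) (g j)
  have hLA : L = LinearMap.ker A.mulVecLin := by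
    ext c
    rw [hL, LinearMap.mem_ker, funext_iff]
    convert (∑ i, c i • coeff ((i : ℕ) * e + ℓ)).forall_mem_span_range_eq_zero_iff g using 3
      <;> simp [A, Matrix.mulVec, dotProduct, mul_comm]
  have hrank : A.rank = r + 1 := by
    refine .trans ?_ (Fintype.card_fin _)
    refine A.rank_eq_card_height_of_isUpperTriangular (Fin.castLE (by omega)) ?_ fun j => ?_
    · intro j i (hij : i < j)
      refine coeff_of_lt_order (φ := g j) _ ?_
      have : (i : ℕ) * e < j * e := Nat.mul_lt_mul_of_pos_right hij he
      rw [hord j]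
      exact_mod_cast (by omega : (i : ℕ) * e + ℓ < j * e + ℓ)
    · exact (order_eq_nat.1 (hord j)).1
  rw [hLA, Matrix.finrank_ker_mulVecLin, hrank, Fintype.card_fin]
  omega
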